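/- arXiv:2403.07445 — 5 statements merged into one kernel-verified Lean document; each statement's English description precedes it below -/
import Mathlib

section
/- Let γ ∈ {−8, 0}. There exists a constant C > 0 (depending only on γ) such that |G(x,t)| ≤ C (1+|t|)^{−1/4} for all x ∈ ℤ and all t ∈ ℝ. -/
/-!
Van der Corput's lemma: if `|φ⁽ᵏ⁾| ≥ sᵏ` on `[a, b]` with `k ≥ 2`, then
`‖∫_a^b exp (i φ)‖ ≤ (3 · 2ᵏ - 2) / s`. For `k = 1`, with `φ''` of one sign, this is integration by
parts against `1 / (i φ')`. In the step `k → k + 1` one may take `φ⁽ᵏ⁺¹⁾ ≥ sᵏ⁺¹` (conjugating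
otherwise), so `|φ⁽ᵏ⁾| < sᵏ` only on one interval of length at most `2 / s`, and the two remaining
pieces are handled by the case `k`.

For `γ = 0` the phase `x ξ + t (2 - 2 cos ξ)²` has `φ'' = 8t (1 - cos ξ)(2 cos ξ + 1)` and
`φ'''' = 8t (8 cos² ξ - cos ξ - 4)`, which have no common zero; so `[0, π]` splits into four arcs on
each of which `|φ''| ≥ |t|` or `|φ''''| ≥ |t|`, and the fourth-derivative arcs give the rate
`|t|^(-1/4)`. The reflection `ξ ↦ -ξ` maps `[-π, 0]` to `[0, π]`, and `ξ ↦ π - ξ` turns the symbol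
for `γ = -8` into the one for `γ = 0` minus `16`.
-/

open MeasureTheory

/-- The fundamental solution of the discrete fourth-order Schrödinger equation
`i∂ₜu + Δ²u − γΔu = 0` on the lattice `ℤ`. -/
noncomputable def G1 (γ : ℝ) (x : ℤ) (t : ℝ) : ℂ :=
  (2 * Real.pi)⁻¹ * ∫ ξ in (-Real.pi)..Real.pi,
    Complex.exp (Complex.I *
      (((x : ℝ) * ξ + ((2 - 2 * Real.cos ξ) ^ 2 + γ * (2 - 2 * Real.cos ξ)) * t : ℝ) : ℂ))

open Real Set intervalIntegral
open Complex (I)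
open scoped Complex ComplexConjugate

section IntegrationByParts

variable {φ ψ χ : ℝ → ℝ} {a b : ℝ}

lemma integral_div_sq_eq_inv_sub_inv (hψ : ∀ ξ, HasDerivAt ψ (χ ξ) ξ) (hχ : Continuous χ)
    (hψ0 : ∀ ξ ∈ uIcc a b, ψ ξ ≠ 0) :
    ∫ ξ in a..b, χ ξ / ψ ξ ^ 2 = (ψ a)⁻¹ - (ψ b)⁻¹ := by
  have hψc : Continuous ψ := continuous_iff_continuousAt.2 fun ξ => (hψ ξ).continuousAt
  have hq : ContinuousOn (fun ξ => χ ξ / ψ ξ ^ 2) (uIcc a b) :=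
    hχ.continuousOn.div (by fun_prop) fun ξ hξ => pow_ne_zero 2 (hψ0 ξ hξ)
  rw [integral_eq_sub_of_hasDerivAt (f := fun ξ => -(ψ ξ)⁻¹)
    (fun ξ hξ => ((hψ ξ).inv (hψ0 ξ hξ)).neg.congr_deriv (by ring)) hq.intervalIntegrable]
  ring

lemma integral_cexp_I_mul_eq_of_hasDerivAt (hφ : ∀ ξ, HasDerivAt φ (ψ ξ) ξ)
    (hψ : ∀ ξ, HasDerivAt ψ (χ ξ) ξ) (hχ : Continuous χ) (hψ0 : ∀ ξ ∈ uIcc a b, ψ ξ ≠ 0) :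
    ∫ ξ in a..b, cexp (I * φ ξ) = cexp (I * φ b) / (I * ψ b) - cexp (I * φ a) / (I * ψ a) -
      I * ∫ ξ in a..b, ((χ ξ / ψ ξ ^ 2 : ℝ) : ℂ) * cexp (I * φ ξ) := by
  have hφc : Continuous φ := continuous_iff_continuousAt.2 fun ξ => (hφ ξ).continuousAt
  have hψc : Continuous ψ := continuous_iff_continuousAt.2 fun ξ => (hψ ξ).continuousAt
  have hIψ : ∀ ξ ∈ uIcc a b, I * (ψ ξ : ℂ) ≠ 0 := fun ξ hξ =>
    mul_ne_zero Complex.I_ne_zero (Complex.ofReal_ne_zero.2 (hψ0 ξ hξ))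
  have hv : ∀ ξ, HasDerivAt (fun ξ => cexp (I * φ ξ)) (I * ψ ξ * cexp (I * φ ξ)) ξ :=
    fun ξ => by simpa [mul_comm] using (((hφ ξ).ofReal_comp).const_mul I).cexp
  -- `u = (I ψ)⁻¹` is chosen so that `u · (cexp (I φ))' = cexp (I φ)`
  have ibp := integral_mul_deriv_eq_deriv_mul (u := fun ξ => (I * ψ ξ)⁻¹)
    (u' := fun ξ => -(I * χ ξ) / (I * ψ ξ) ^ 2)
    (fun ξ hξ => (((hψ ξ).ofReal_comp).const_mul I).inv (hIψ ξ hξ)) (fun ξ _ => hv ξ)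
    (ContinuousOn.intervalIntegrable (ContinuousOn.div (by fun_prop) (by fun_prop)
      fun ξ hξ => pow_ne_zero 2 (hIψ ξ hξ)))
    (by apply Continuous.intervalIntegrable; fun_prop)
  rw [integral_congr fun ξ hξ => inv_mul_cancel_left₀ (hIψ ξ hξ) (cexp (I * φ ξ))] at ibp
  rw [ibp, ← intervalIntegral.integral_const_mul]
  congr 1
  · ring
  · refine integral_congr fun ξ hξ => ?_
    have := Complex.ofReal_ne_zero.2 (hψ0 ξ hξ)
    rw [mul_pow, Complex.I_sq]
    push_cast
    field_simp

end IntegrationByParts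

lemma norm_integral_cexp_I_mul_le_of_le_abs_deriv {φ : ℝ → ℝ} {a b lam : ℝ} (hab : a ≤ b)
    (hlam : 0 < lam) (hφ : ContDiff ℝ 2 φ) (hφ' : ∀ ξ ∈ Icc a b, lam ≤ |deriv φ ξ|)
    (hφ'' : ∀ ξ ∈ Icc a b, 0 ≤ iteratedDeriv 2 φ ξ) :
    ‖∫ ξ in a..b, cexp (I * φ ξ)‖ ≤ 4 / lam := by
  set ψ := deriv φ
  set χ := iteratedDeriv 2 φ
  have hψd : ∀ ξ, HasDerivAt ψ (χ ξ) ξ := fun ξ => by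
    have := ((hφ.differentiable_iteratedDeriv 1 (by norm_num)) ξ).hasDerivAt
    rwa [← iteratedDeriv_succ, iteratedDeriv_one] at this
  have hχ : Continuous χ := hφ.continuous_iteratedDeriv 2 le_rfl
  have hφd : ∀ ξ, HasDerivAt φ (ψ ξ) ξ := fun ξ =>
    ((hφ.differentiable (by norm_num)) ξ).hasDerivAt
  have hinv : ∀ ξ ∈ Icc a b, |ψ ξ|⁻¹ ≤ lam⁻¹ := fun ξ hξ => inv_anti₀ hlam (hφ' ξ hξ)
  have hψ0 : ∀ ξ ∈ uIcc a b, ψ ξ ≠ 0 := fun ξ hξ => by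
    rw [uIcc_of_le hab] at hξ
    exact abs_pos.1 (hlam.trans_le (hφ' ξ hξ))
  have hend : ∀ ξ ∈ Icc a b, ‖cexp (I * φ ξ) / (I * ψ ξ)‖ ≤ lam⁻¹ := fun ξ hξ => by
    simpa [Complex.norm_exp_I_mul_ofReal] using hinv ξ hξ
  have hrem : ‖∫ ξ in a..b, ((χ ξ / ψ ξ ^ 2 : ℝ) : ℂ) * cexp (I * φ ξ)‖ ≤ 2 * lam⁻¹ :=
    calc _ ≤ ∫ ξ in a..b, χ ξ / ψ ξ ^ 2 := by
          refine norm_integral_le_of_norm_le hab (ae_of_all _ fun ξ hξ => ?_) ?_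
          · simp [Complex.norm_exp_I_mul_ofReal, abs_of_nonneg (hφ'' ξ (Ioc_subset_Icc_self hξ))]
          · have hψc : Continuous ψ := continuous_iff_continuousAt.2 fun ξ => (hψd ξ).continuousAt
            exact ContinuousOn.intervalIntegrable (u := fun ξ => χ ξ / ψ ξ ^ 2)
              (hχ.continuousOn.div (by fun_prop) fun ξ hξ => pow_ne_zero 2 (hψ0 ξ hξ))
      _ = (ψ a)⁻¹ - (ψ b)⁻¹ := integral_div_sq_eq_inv_sub_inv hψd hχ hψ0
      _ ≤ |ψ a|⁻¹ + |ψ b|⁻¹ := by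
          rw [← abs_inv, ← abs_inv]
          exact (le_abs_self _).trans (abs_sub _ _)
      _ ≤ 2 * lam⁻¹ := by linarith [hinv a (left_mem_Icc.2 hab), hinv b (right_mem_Icc.2 hab)]
  rw [integral_cexp_I_mul_eq_of_hasDerivAt hφd hψd hχ hψ0]
  calc _ ≤ ‖cexp (I * φ b) / (I * ψ b)‖ + ‖cexp (I * φ a) / (I * ψ a)‖ +
        ‖I * ∫ ξ in a..b, ((χ ξ / ψ ξ ^ 2 : ℝ) : ℂ) * cexp (I * φ ξ)‖ :=
        (norm_sub_le _ _).trans (add_le_add_left (norm_sub_le _ _) _)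
    _ ≤ lam⁻¹ + lam⁻¹ + 2 * lam⁻¹ := by
        rw [norm_mul, Complex.norm_I, one_mul]
        gcongr
        exacts [hend b (right_mem_Icc.2 hab), hend a (left_mem_Icc.2 hab)]
    _ = 4 / lam := by ring

section Splitting

variable {E : Type*} [NormedAddCommGroup E] [NormedSpace ℝ E] {F : ℝ → E} {ψ : ℝ → ℝ}
  {a b μ r C : ℝ}

lemma norm_integral_le_sub_of_norm_le_one (hab : a ≤ b) (hF : ∀ ξ, ‖F ξ‖ ≤ 1) :
    ‖∫ ξ in a..b, F ξ‖ ≤ b - a := by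
  simpa [abs_of_nonneg (sub_nonneg.2 hab)] using
    intervalIntegral.norm_integral_le_of_norm_le_const (a := a) (b := b) fun ξ _ => hF ξ

lemma norm_integral_le_add_of_neg_le (hab : a ≤ b) (hμ : 0 < μ) (hr : 0 ≤ r) (hC : 0 ≤ C)
    (hF : Continuous F) (hF1 : ∀ ξ, ‖F ξ‖ ≤ 1)
    (hgrow : ∀ ξ ∈ Icc a b, ∀ η ∈ Icc a b, ξ ≤ η → μ * (η - ξ) ≤ ψ η - ψ ξ)
    (hlarge : ∀ a' b', a ≤ a' → a' ≤ b' → b' ≤ b → (∀ ξ ∈ Icc a' b', r ≤ |ψ ξ|) →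
      ‖∫ ξ in a'..b', F ξ‖ ≤ C)
    (ha : -r ≤ ψ a) :
    ‖∫ ξ in a..b, F ξ‖ ≤ C + 2 * r / μ := by
  set c := a + 2 * r / μ
  rcases le_total b c with hbc | hcb
  · have := norm_integral_le_sub_of_norm_le_one hab hF1
    linarith
  have hac : a ≤ c := le_add_of_nonneg_right (by positivity)
  have hright : ‖∫ ξ in c..b, F ξ‖ ≤ C := by
    refine hlarge c b hac hcb le_rfl fun ξ hξ => ?_
    have hgain := hgrow a (left_mem_Icc.2 hab) ξ ⟨hac.trans hξ.1, hξ.2⟩ (hac.trans hξ.1)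
    have hca : μ * (c - a) = 2 * r := by simp only [c]; field_simp; ring
    have := mul_le_mul_of_nonneg_left (sub_le_sub_right hξ.1 a) hμ.le
    exact le_abs.2 (Or.inl (by linarith))
  rw [← integral_add_adjacent_intervals (hF.intervalIntegrable a c) (hF.intervalIntegrable c b)]
  have := norm_integral_le_sub_of_norm_le_one hac hF1
  calc _ ≤ ‖∫ ξ in a..c, F ξ‖ + ‖∫ ξ in c..b, F ξ‖ := norm_add_le _ _
    _ ≤ C + 2 * r / μ := by simp only [c] at this; linarith

lemma norm_integral_le_two_mul_add_of_le_deriv (hab : a ≤ b) (hμ : 0 < μ) (hr : 0 ≤ r)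
    (hC : 0 ≤ C) (hF : Continuous F) (hF1 : ∀ ξ, ‖F ξ‖ ≤ 1) (hψ : Differentiable ℝ ψ)
    (hψ' : ∀ ξ ∈ Icc a b, μ ≤ deriv ψ ξ)
    (hlarge : ∀ a' b', a ≤ a' → a' ≤ b' → b' ≤ b → (∀ ξ ∈ Icc a' b', r ≤ |ψ ξ|) →
      ‖∫ ξ in a'..b', F ξ‖ ≤ C) :
    ‖∫ ξ in a..b, F ξ‖ ≤ 2 * C + 2 * r / μ := by
  have hrμ : 0 ≤ 2 * r / μ := by positivity
  have hgrow := (convex_Icc a b).mul_sub_le_image_sub_of_le_deriv hψ.continuous.continuousOn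
    hψ.differentiableOn fun ξ hξ => hψ' ξ (interior_subset hξ)
  have hmono : MonotoneOn ψ (Icc a b) := fun ξ hξ η hη h => by
    nlinarith [hgrow ξ hξ η hη h, mul_nonneg hμ.le (sub_nonneg.2 h)]
  rcases le_or_gt (-r) (ψ a) with ha | ha
  · linarith [norm_integral_le_add_of_neg_le hab hμ hr hC hF hF1 hgrow hlarge ha]
  have hb_mem : b ∈ Icc a b := right_mem_Icc.2 hab
  rcases lt_or_ge (ψ b) (-r) with hb | hb
  · have := hlarge a b le_rfl hab le_rfl fun ξ hξ =>
      le_abs.2 (Or.inr (by linarith [hmono hξ hb_mem hξ.2]))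
    linarith
  -- cut `[a, b]` where `ψ` crosses `-r`: `ψ ≤ -r` on the left, the one-sided bound on the right
  obtain ⟨c, hc, hψc⟩ := intermediate_value_Icc hab hψ.continuous.continuousOn ⟨ha.le, hb⟩
  have hc_mem : c ∈ Icc a b := hc
  have hleft : ‖∫ ξ in a..c, F ξ‖ ≤ C :=
    hlarge a c le_rfl hc.1 hc.2 fun ξ hξ =>
      le_abs.2 (Or.inr (by linarith [hmono ⟨hξ.1, hξ.2.trans hc.2⟩ hc_mem hξ.2]))
  have hright : ‖∫ ξ in c..b, F ξ‖ ≤ C + 2 * r / μ :=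
    norm_integral_le_add_of_neg_le hc.2 hμ hr hC hF hF1
      (fun ξ hξ η hη => hgrow ξ ⟨hc.1.trans hξ.1, hξ.2⟩ η ⟨hc.1.trans hη.1, hη.2⟩)
      (fun a' b' ha' => hlarge a' b' (hc.1.trans ha')) hψc.ge
  rw [← integral_add_adjacent_intervals (hF.intervalIntegrable a c) (hF.intervalIntegrable c b)]
  calc _ ≤ ‖∫ ξ in a..c, F ξ‖ + ‖∫ ξ in c..b, F ξ‖ := norm_add_le _ _
    _ ≤ 2 * C + 2 * r / μ := by linarith

end Splitting

lemma IsPreconnected.forall_le_or_forall_le_neg {X : Type*} [TopologicalSpace X] {s : Set X}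
    (hs : IsPreconnected s) {χ : X → ℝ} (hχ : Continuous χ) {m : ℝ} (hm : 0 < m)
    (h : ∀ x ∈ s, m ≤ |χ x|) : (∀ x ∈ s, m ≤ χ x) ∨ (∀ x ∈ s, χ x ≤ -m) := by
  have hcover : s ⊆ {x | 0 < χ x} ∪ {x | χ x < 0} := fun x hx => by
    have : χ x ≠ 0 := fun h0 => by have := h x hx; rw [h0, abs_zero] at this; linarith
    exact this.lt_or_gt.symm
  rcases hs.subset_or_subset (isOpen_lt continuous_const hχ) (isOpen_lt hχ continuous_const)
    (Set.disjoint_left.2 fun x (h₁ : 0 < χ x) (h₂ : χ x < 0) => lt_asymm h₁ h₂) hcover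
    with hpos | hneg
  · exact Or.inl fun x hx => abs_of_pos (α := ℝ) (hpos hx) ▸ h x hx
  · exact Or.inr fun x hx => by linarith [abs_of_neg (α := ℝ) (hneg hx) ▸ h x hx]

lemma norm_integral_cexp_I_mul_neg (φ : ℝ → ℝ) (a b : ℝ) :
    ‖∫ ξ in a..b, cexp (I * ↑(-φ ξ))‖ = ‖∫ ξ in a..b, cexp (I * φ ξ)‖ := by
  have hconj : ∀ ξ, cexp (I * ↑(-φ ξ)) = conj (cexp (I * φ ξ)) := fun ξ => by
    rw [← Complex.exp_conj]; simp
  simp_rw [hconj, intervalIntegral_conj, RCLike.norm_conj]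

lemma norm_integral_cexp_I_mul_le_of_abs_of_pos {k : ℕ} {a b m C : ℝ} (hm : 0 < m)
    (hpos : ∀ φ : ℝ → ℝ, ContDiff ℝ k φ → (∀ ξ ∈ Icc a b, m ≤ iteratedDeriv k φ ξ) →
      ‖∫ ξ in a..b, cexp (I * φ ξ)‖ ≤ C)
    {φ : ℝ → ℝ} (hφ : ContDiff ℝ k φ) (h : ∀ ξ ∈ Icc a b, m ≤ |iteratedDeriv k φ ξ|) :
    ‖∫ ξ in a..b, cexp (I * φ ξ)‖ ≤ C := by
  rcases isPreconnected_Icc.forall_le_or_forall_le_neg (hφ.continuous_iteratedDeriv k le_rfl)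
    hm h with hp | hn
  · exact hpos φ hφ hp
  · rw [← norm_integral_cexp_I_mul_neg]
    exact hpos (-φ) hφ.neg fun ξ hξ => by rw [iteratedDeriv_neg]; linarith [hn ξ hξ]

theorem norm_integral_cexp_I_mul_le_of_le_iteratedDeriv {k : ℕ} (hk : 2 ≤ k) {φ : ℝ → ℝ}
    {a b s : ℝ} (hab : a ≤ b) (hs : 0 < s) (hφ : ContDiff ℝ k φ)
    (h : ∀ ξ ∈ Icc a b, s ^ k ≤ iteratedDeriv k φ ξ) :
    ‖∫ ξ in a..b, cexp (I * φ ξ)‖ ≤ (3 * 2 ^ k - 2) / s := by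
  induction k, hk using Nat.le_induction generalizing φ a b with
  | base =>
    have hφ2 : iteratedDeriv 2 φ = deriv (deriv φ) := by rw [iteratedDeriv_succ, iteratedDeriv_one]
    refine (norm_integral_le_two_mul_add_of_le_deriv (ψ := deriv φ) (r := s) (C := 4 / s) hab
      (pow_pos hs 2) hs.le (by positivity) (by fun_prop)
      (fun ξ => (Complex.norm_exp_I_mul_ofReal _).le)
      (iteratedDeriv_one (f := φ) ▸ hφ.differentiable_iteratedDeriv 1 (by norm_num)) (hφ2 ▸ h)
      fun a' b' ha' hab' hb' hlarge => norm_integral_cexp_I_mul_le_of_le_abs_deriv hab' hs hφ hlarge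
        fun ξ hξ => (pow_pos hs 2).le.trans (h ξ ⟨ha'.trans hξ.1, hξ.2.trans hb'⟩)).trans_eq ?_
    field_simp
    ring
  | succ k hk ih =>
    have hC : (0 : ℝ) ≤ (3 * 2 ^ k - 2) / s := by
      have : (1 : ℝ) ≤ 2 ^ k := one_le_pow₀ (by norm_num)
      exact div_nonneg (by linarith) hs.le
    refine (norm_integral_le_two_mul_add_of_le_deriv (ψ := iteratedDeriv k φ) (r := s ^ k) hab
      (pow_pos hs (k + 1)) (pow_pos hs k).le hC (by fun_prop)
      (fun ξ => (Complex.norm_exp_I_mul_ofReal _).le)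
      (hφ.differentiable_iteratedDeriv k (by exact_mod_cast k.lt_succ_self))
      (iteratedDeriv_succ (f := φ) ▸ h)
      fun a' b' ha' hab' hb' hlarge => norm_integral_cexp_I_mul_le_of_abs_of_pos (pow_pos hs k)
        (fun _ hψ hψk => ih hab' hψ hψk) (hφ.of_le (by exact_mod_cast k.le_succ))
        hlarge).trans_eq ?_
    field_simp
    ring

theorem norm_integral_cexp_I_mul_le_of_le_abs_iteratedDeriv {k : ℕ} (hk : 2 ≤ k) {φ : ℝ → ℝ}
    {a b s : ℝ} (hab : a ≤ b) (hs : 0 < s) (hφ : ContDiff ℝ k φ)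
    (h : ∀ ξ ∈ Icc a b, s ^ k ≤ |iteratedDeriv k φ ξ|) :
    ‖∫ ξ in a..b, cexp (I * φ ξ)‖ ≤ (3 * 2 ^ k - 2) / s :=
  norm_integral_cexp_I_mul_le_of_abs_of_pos (pow_pos hs k)
    (fun _ hψ hψk => norm_integral_cexp_I_mul_le_of_le_iteratedDeriv hk hab hs hψ hψk) hφ h

noncomputable def phase (γ x t ξ : ℝ) : ℝ := x * ξ + ((2 - 2 * cos ξ) ^ 2 + γ * (2 - 2 * cos ξ)) * t

lemma G1_eq_integral_phase (γ : ℝ) (x : ℤ) (t : ℝ) :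
    G1 γ x t = (2 * π)⁻¹ * ∫ ξ in -π..π, cexp (I * phase γ x t ξ) := rfl

lemma contDiff_phase (γ x t : ℝ) {n : WithTop ℕ∞} : ContDiff ℝ n (phase γ x t) := by
  unfold phase; fun_prop

lemma phase_neg (γ x t ξ : ℝ) : phase γ x t (-ξ) = phase γ (-x) t ξ := by
  simp only [phase, cos_neg]; ring

lemma phase_neg_eight_pi_sub (x t ξ : ℝ) :
    phase (-8) x t (π - ξ) = phase 0 (-x) t ξ + (x * π - 16 * t) := by
  simp only [phase, cos_pi_sub]; ring

section PhaseDerivatives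

variable (x t : ℝ)

lemma iteratedDeriv_two_phase_zero :
    iteratedDeriv 2 (phase 0 x t) = fun ξ => 8 * t * ((1 - cos ξ) * (2 * cos ξ + 1)) := by
  have h1 : deriv (phase 0 x t) = fun ξ => x + 8 * t * ((1 - cos ξ) * sin ξ) := by
    have hphase : phase 0 x t = fun ξ => x * ξ + (2 - 2 * cos ξ) ^ 2 * t := by
      funext ξ; simp [phase]
    funext ξ
    rw [hphase]
    refine HasDerivAt.deriv ?_
    refine ((hasDerivAt_id ξ).const_mul x).fun_add
      (((((hasDerivAt_cos ξ).const_mul 2).const_sub 2).fun_pow 2).mul_const t) |>.congr_deriv ?_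
    norm_num
    ring
  rw [iteratedDeriv_succ, iteratedDeriv_one, h1]
  funext ξ
  refine HasDerivAt.deriv ?_
  refine ((((hasDerivAt_cos ξ).const_sub 1).fun_mul (hasDerivAt_sin ξ)).const_mul
    (8 * t)).const_add x |>.congr_deriv ?_
  linear_combination (8 * t) * Real.sin_sq_add_cos_sq ξ

lemma iteratedDeriv_four_phase_zero :
    iteratedDeriv 4 (phase 0 x t) = fun ξ => 8 * t * (8 * cos ξ ^ 2 - cos ξ - 4) := by
  have h3 : deriv (fun ξ => 8 * t * ((1 - cos ξ) * (2 * cos ξ + 1))) =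
      fun ξ => 8 * t * (sin ξ * (4 * cos ξ - 1)) := by
    funext ξ
    refine HasDerivAt.deriv ?_
    refine (((hasDerivAt_cos ξ).const_sub 1).fun_mul
      (((hasDerivAt_cos ξ).const_mul 2).add_const 1)).const_mul (8 * t) |>.congr_deriv ?_
    ring
  rw [iteratedDeriv_succ, iteratedDeriv_succ, iteratedDeriv_two_phase_zero, h3]
  funext ξ
  refine HasDerivAt.deriv ?_
  refine ((hasDerivAt_sin ξ).fun_mul (((hasDerivAt_cos ξ).const_mul 4).sub_const 1)).const_mul
    (8 * t) |>.congr_deriv ?_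
  linear_combination (-32 * t) * Real.sin_sq_add_cos_sq ξ

end PhaseDerivatives

lemma norm_integral_cexp_I_mul_le_of_le_abs_iteratedDeriv_two_or_four {φ : ℝ → ℝ}
    (hφ : ContDiff ℝ 4 φ) {a b τ : ℝ} (hab : a ≤ b) (hτ : 1 ≤ τ)
    (h : (∀ ξ ∈ Icc a b, τ ≤ |iteratedDeriv 2 φ ξ|) ∨ (∀ ξ ∈ Icc a b, τ ≤ |iteratedDeriv 4 φ ξ|)) :
    ‖∫ ξ in a..b, cexp (I * φ ξ)‖ ≤ 46 / τ ^ (1 / 4 : ℝ) := by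
  set s := τ ^ (1 / 4 : ℝ)
  have hs : 1 ≤ s := one_le_rpow hτ (by norm_num)
  have hs4 : s ^ 4 = τ := by
    rw [← rpow_natCast, ← rpow_mul (by linarith)]; norm_num
  rcases h with h2 | h4
  · have := norm_integral_cexp_I_mul_le_of_le_abs_iteratedDeriv le_rfl hab (by linarith)
      (hφ.of_le (by norm_num)) fun ξ hξ =>
        ((pow_le_pow_right₀ hs (by norm_num : 2 ≤ 4)).trans hs4.le).trans (h2 ξ hξ)
    exact this.trans (by gcongr; norm_num)
  · have := norm_integral_cexp_I_mul_le_of_le_abs_iteratedDeriv (by norm_num) hab (by linarith)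
      hφ fun ξ hξ => hs4.le.trans (h4 ξ hξ)
    exact this.trans_eq (by norm_num)

lemma cos_mem_Icc_of_mem_Icc_arccos {c₀ c₁ ξ : ℝ} (hc₀ : c₀ ∈ Icc (-1) 1) (hc₁ : c₁ ∈ Icc (-1) 1)
    (hξ : ξ ∈ Icc (arccos c₀) (arccos c₁)) : cos ξ ∈ Icc c₁ c₀ := by
  constructor
  · calc c₁ = cos (arccos c₁) := (cos_arccos hc₁.1 hc₁.2).symm
      _ ≤ cos ξ := cos_le_cos_of_nonneg_of_le_pi ((arccos_nonneg _).trans hξ.1)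
          (arccos_le_pi _) hξ.2
  · calc cos ξ ≤ cos (arccos c₀) := cos_le_cos_of_nonneg_of_le_pi (arccos_nonneg _)
          (hξ.2.trans (arccos_le_pi _)) hξ.1
      _ = c₀ := cos_arccos hc₀.1 hc₀.2

lemma norm_integral_phase_zero_arccos_le (x : ℝ) {t : ℝ} (ht : 1 ≤ |t|) {c₀ c₁ : ℝ}
    (hc₀ : c₀ ∈ Icc (-1) 1) (hc₁ : c₁ ∈ Icc (-1) 1) (hc : c₁ ≤ c₀)
    (h : (∀ c ∈ Icc c₁ c₀, 1 ≤ |8 * ((1 - c) * (2 * c + 1))|) ∨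
      (∀ c ∈ Icc c₁ c₀, 1 ≤ |8 * (8 * c ^ 2 - c - 4)|)) :
    ‖∫ ξ in arccos c₀..arccos c₁, cexp (I * phase 0 x t ξ)‖ ≤ 46 / |t| ^ (1 / 4 : ℝ) := by
  have hscale : ∀ p : ℝ, 1 ≤ |8 * p| → |t| ≤ |8 * t * p| := fun p hp => by
    rw [show 8 * t * p = t * (8 * p) by ring, abs_mul]
    nlinarith [abs_nonneg t]
  refine norm_integral_cexp_I_mul_le_of_le_abs_iteratedDeriv_two_or_four (contDiff_phase 0 x t)
    (arccos_le_arccos hc) ht ?_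
  rw [iteratedDeriv_two_phase_zero, iteratedDeriv_four_phase_zero]
  exact h.imp (fun h ξ hξ => hscale _ (h _ (cos_mem_Icc_of_mem_Icc_arccos hc₀ hc₁ hξ)))
    (fun h ξ hξ => hscale _ (h _ (cos_mem_Icc_of_mem_Icc_arccos hc₀ hc₁ hξ)))

lemma continuous_cexp_I_mul_phase (γ x t : ℝ) : Continuous fun ξ => cexp (I * phase γ x t ξ) := by
  have := (contDiff_phase γ x t (n := 0)).continuous
  fun_prop

lemma norm_integral_add_adjacent_le {f : ℝ → ℂ} (hf : Continuous f) (a b c : ℝ) :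
    ‖∫ ξ in a..c, f ξ‖ ≤ ‖∫ ξ in a..b, f ξ‖ + ‖∫ ξ in b..c, f ξ‖ := by
  rw [← integral_add_adjacent_intervals (hf.intervalIntegrable a b) (hf.intervalIntegrable b c)]
  exact norm_add_le _ _

lemma norm_integral_zero_pi_phase_zero_le (x : ℝ) {t : ℝ} (ht : 1 ≤ |t|) :
    ‖∫ ξ in 0..π, cexp (I * phase 0 x t ξ)‖ ≤ 184 / |t| ^ (1 / 4 : ℝ) := by
  have hF := continuous_cexp_I_mul_phase 0 x t
  have hends : ∫ ξ in 0..π, cexp (I * phase 0 x t ξ) =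
      ∫ ξ in arccos 1..arccos (-1), cexp (I * phase 0 x t ξ) := by
    rw [arccos_one, arccos_neg_one]
  -- `φ''` vanishes where `cos ξ ∈ {1, -1/2}`, `φ''''` where `cos ξ = (1 ± √129) / 16 ≈ 0.77, -0.65`
  have I₁ := norm_integral_phase_zero_arccos_le x ht (c₀ := 1) (c₁ := 9 / 10)
    (by norm_num) (by norm_num) (by norm_num) <| Or.inr fun c hc =>
      le_abs.2 (Or.inl (by nlinarith [hc.1, sq_nonneg (c - 9 / 10)]))
  have I₂ := norm_integral_phase_zero_arccos_le x ht (c₀ := 9 / 10) (c₁ := -(2 / 5))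
    (by norm_num) (by norm_num) (by norm_num) <| Or.inl fun c hc =>
      le_abs.2 (Or.inl (by nlinarith [mul_nonneg (sub_nonneg.2 hc.1) (sub_nonneg.2 hc.2)]))
  have I₃ := norm_integral_phase_zero_arccos_le x ht (c₀ := -(2 / 5)) (c₁ := -(3 / 5))
    (by norm_num) (by norm_num) (by norm_num) <| Or.inr fun c hc =>
      le_abs.2 (Or.inr (by nlinarith [mul_nonneg (sub_nonneg.2 hc.1) (sub_nonneg.2 hc.2)]))
  have I₄ := norm_integral_phase_zero_arccos_le x ht (c₀ := -(3 / 5)) (c₁ := -1)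
    (by norm_num) (by norm_num) (by norm_num) <| Or.inl fun c hc =>
      le_abs.2 (Or.inr (by nlinarith [hc.2, sq_nonneg (c + 3 / 5)]))
  rw [hends, show (184 : ℝ) / |t| ^ (1 / 4 : ℝ) = 4 * (46 / |t| ^ (1 / 4 : ℝ)) by ring]
  linarith [norm_integral_add_adjacent_le hF (arccos 1) (arccos (9 / 10)) (arccos (-1)),
    norm_integral_add_adjacent_le hF (arccos (9 / 10)) (arccos (-(2 / 5))) (arccos (-1)),
    norm_integral_add_adjacent_le hF (arccos (-(2 / 5))) (arccos (-(3 / 5))) (arccos (-1))]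

lemma integral_neg_pi_zero_phase (γ x t : ℝ) :
    ∫ ξ in -π..0, cexp (I * phase γ x t ξ) = ∫ ξ in 0..π, cexp (I * phase γ (-x) t ξ) := by
  simp_rw [← phase_neg]
  rw [integral_comp_neg fun ξ => cexp (I * phase γ x t ξ), neg_zero]

lemma norm_integral_zero_pi_phase_neg_eight (x t : ℝ) :
    ‖∫ ξ in 0..π, cexp (I * phase (-8) x t ξ)‖ = ‖∫ ξ in 0..π, cexp (I * phase 0 (-x) t ξ)‖ := by
  have hrefl : ∫ ξ in 0..π, cexp (I * phase (-8) x t ξ) =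
      ∫ ξ in 0..π, cexp (I * phase (-8) x t (π - ξ)) := by
    rw [integral_comp_sub_left fun ξ => cexp (I * phase (-8) x t ξ), sub_self, sub_zero]
  simp_rw [hrefl, phase_neg_eight_pi_sub, Complex.ofReal_add, mul_add, Complex.exp_add,
    intervalIntegral.integral_mul_const, norm_mul, Complex.norm_exp_I_mul_ofReal, mul_one]

lemma norm_integral_zero_pi_phase_le {γ : ℝ} (hγ : γ = -8 ∨ γ = 0) (x : ℝ) {t : ℝ} (ht : 1 ≤ |t|) :
    ‖∫ ξ in 0..π, cexp (I * phase γ x t ξ)‖ ≤ 184 / |t| ^ (1 / 4 : ℝ) := by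
  rcases hγ with rfl | rfl
  · rw [norm_integral_zero_pi_phase_neg_eight]
    exact norm_integral_zero_pi_phase_zero_le (-x) ht
  · exact norm_integral_zero_pi_phase_zero_le x ht

lemma norm_integral_phase_le {γ : ℝ} (hγ : γ = -8 ∨ γ = 0) (x : ℝ) {t : ℝ} (ht : 1 ≤ |t|) :
    ‖∫ ξ in -π..π, cexp (I * phase γ x t ξ)‖ ≤ 368 / |t| ^ (1 / 4 : ℝ) := by
  have := norm_integral_add_adjacent_le (continuous_cexp_I_mul_phase γ x t) (-π) 0 π
  rw [integral_neg_pi_zero_phase] at this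
  rw [show (368 : ℝ) / |t| ^ (1 / 4 : ℝ) = 2 * (184 / |t| ^ (1 / 4 : ℝ)) by ring]
  linarith [norm_integral_zero_pi_phase_le hγ x ht, norm_integral_zero_pi_phase_le hγ (-x) ht]

lemma le_two_mul_mul_one_add_abs_rpow_neg {y t A p : ℝ} (hA : 0 ≤ A) (hp₀ : 0 ≤ p) (hp₁ : p ≤ 1)
    (hsmall : y ≤ A) (hlarge : 1 ≤ |t| → y ≤ A / |t| ^ p) : y ≤ 2 * A * (1 + |t|) ^ (-p) := by
  have h1t : 1 ≤ 1 + |t| := le_add_of_nonneg_right (abs_nonneg t)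
  have hpos : 0 < (1 + |t|) ^ p := rpow_pos_of_pos (by linarith) p
  rw [rpow_neg (by linarith), ← div_eq_mul_inv]
  rcases le_or_gt 1 |t| with ht | ht
  · have hpow : (1 + |t|) ^ p ≤ 2 * |t| ^ p :=
      calc (1 + |t|) ^ p ≤ (2 * |t|) ^ p := rpow_le_rpow (by linarith) (by linarith) hp₀
        _ = 2 ^ p * |t| ^ p := mul_rpow (by norm_num) (abs_nonneg t)
        _ ≤ 2 * |t| ^ p := by
          gcongr
          simpa using rpow_le_rpow_of_exponent_le (by norm_num : (1 : ℝ) ≤ 2) hp₁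
    refine (hlarge ht).trans ?_
    rw [div_le_div_iff₀ (rpow_pos_of_pos (by linarith) p) hpos]
    nlinarith
  · have hpow : (1 + |t|) ^ p ≤ 2 :=
      calc (1 + |t|) ^ p ≤ (1 + |t|) ^ (1 : ℝ) := rpow_le_rpow_of_exponent_le h1t hp₁
        _ ≤ 2 := by rw [rpow_one]; linarith
    refine hsmall.trans ?_
    rw [le_div_iff₀ hpos]
    nlinarith

lemma norm_G1 (γ : ℝ) (x : ℤ) (t : ℝ) :
    ‖G1 γ x t‖ = (2 * π)⁻¹ * ‖∫ ξ in -π..π, cexp (I * phase γ x t ξ)‖ := by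
  rw [G1_eq_integral_phase, norm_mul, Complex.norm_real, norm_of_nonneg (by positivity)]

lemma norm_G1_le_one (γ : ℝ) (x : ℤ) (t : ℝ) : ‖G1 γ x t‖ ≤ 1 := by
  have hint := norm_integral_le_of_norm_le_const (a := -π) (b := π)
    fun ξ _ => (Complex.norm_exp_I_mul_ofReal (phase γ x t ξ)).le
  rw [abs_of_nonneg (by linarith [pi_pos])] at hint
  rw [norm_G1]
  calc (2 * π)⁻¹ * _ ≤ (2 * π)⁻¹ * (1 * (π - -π)) := by gcongr
    _ = 1 := by field_simp; ring

/-- For `γ ∈ {−8, 0}` the fundamental solution on `ℤ` decays like `(1+|t|)^{-1/4}`. -/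
theorem stmt0 (γ : ℝ) (hγ : γ = -8 ∨ γ = 0) :
    ∃ C > (0 : ℝ), ∀ (x : ℤ) (t : ℝ),
      ‖G1 γ x t‖ ≤ C * (1 + |t|) ^ (-(1 / 4 : ℝ)) := by
  refine ⟨2 * 62, by norm_num, fun x t => ?_⟩
  refine le_two_mul_mul_one_add_abs_rpow_neg (by norm_num) (by norm_num) (by norm_num)
    ((norm_G1_le_one γ x t).trans (by norm_num)) fun ht => ?_
  have hX : 0 < |t| ^ (1 / 4 : ℝ) := rpow_pos_of_pos (by linarith) _
  calc ‖G1 γ x t‖ ≤ (2 * π)⁻¹ * (368 / |t| ^ (1 / 4 : ℝ)) := by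
        rw [norm_G1]; gcongr; exact norm_integral_phase_le hγ x ht
    _ ≤ 62 / |t| ^ (1 / 4 : ℝ) := by
        rw [← mul_div_assoc]
        gcongr
        rw [inv_mul_le_iff₀ (by positivity)]
        linarith [pi_gt_three]
end

section
/- For every γ ∈ ℝ there exists M > 0 such that for all u ∈ [−π, π], max(|−16 cos²u + 2(4+γ) cos u + 8|, |2 sin u (16 cos u − 4 − γ)|, |64 cos²u − 2(4+γ) cos u − 32|) ≥ M. -/
/-- For every `γ ∈ ℝ` the second, third and fourth derivatives of the one-dimensional
phase `φ(u) = (2 − 2cos u)(2 + γ − 2cos u) + v u` have no common small value on `[−π, π]`: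
their maximal modulus is bounded below by a positive constant `M` (depending only on `γ`). -/
theorem stmt5 (γ : ℝ) :
    ∃ M > (0 : ℝ), ∀ u ∈ Set.Icc (-Real.pi) Real.pi,
      M ≤ max (|(-16) * Real.cos u ^ 2 + 2 * (4 + γ) * Real.cos u + 8|)
          (max (|2 * Real.sin u * (16 * Real.cos u - 4 - γ)|)
            (|64 * Real.cos u ^ 2 - 2 * (4 + γ) * Real.cos u - 32|)) := by
  set f : ℝ → ℝ := fun u =>
    max (|(-16) * Real.cos u ^ 2 + 2 * (4 + γ) * Real.cos u + 8|)
        (max (|2 * Real.sin u * (16 * Real.cos u - 4 - γ)|)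
          (|64 * Real.cos u ^ 2 - 2 * (4 + γ) * Real.cos u - 32|)) with hf
  have hpos : ∀ u : ℝ, 0 < f u := by
    intro u
    by_contra h
    push_neg at h
    have h1 : |(-16) * Real.cos u ^ 2 + 2 * (4 + γ) * Real.cos u + 8| = 0 := by
      have := abs_nonneg ((-16) * Real.cos u ^ 2 + 2 * (4 + γ) * Real.cos u + 8)
      have := le_max_left (|(-16) * Real.cos u ^ 2 + 2 * (4 + γ) * Real.cos u + 8|)
        (max (|2 * Real.sin u * (16 * Real.cos u - 4 - γ)|)
          (|64 * Real.cos u ^ 2 - 2 * (4 + γ) * Real.cos u - 32|))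
      simp only [hf] at h
      linarith
    have h2 : |2 * Real.sin u * (16 * Real.cos u - 4 - γ)| = 0 := by
      have := abs_nonneg (2 * Real.sin u * (16 * Real.cos u - 4 - γ))
      have h' := le_max_left (|2 * Real.sin u * (16 * Real.cos u - 4 - γ)|)
        (|64 * Real.cos u ^ 2 - 2 * (4 + γ) * Real.cos u - 32|)
      have h'' := le_max_right (|(-16) * Real.cos u ^ 2 + 2 * (4 + γ) * Real.cos u + 8|)
        (max (|2 * Real.sin u * (16 * Real.cos u - 4 - γ)|)
          (|64 * Real.cos u ^ 2 - 2 * (4 + γ) * Real.cos u - 32|))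
      simp only [hf] at h
      linarith
    have h3 : |64 * Real.cos u ^ 2 - 2 * (4 + γ) * Real.cos u - 32| = 0 := by
      have := abs_nonneg (64 * Real.cos u ^ 2 - 2 * (4 + γ) * Real.cos u - 32)
      have h' := le_max_right (|2 * Real.sin u * (16 * Real.cos u - 4 - γ)|)
        (|64 * Real.cos u ^ 2 - 2 * (4 + γ) * Real.cos u - 32|)
      have h'' := le_max_right (|(-16) * Real.cos u ^ 2 + 2 * (4 + γ) * Real.cos u + 8|)
        (max (|2 * Real.sin u * (16 * Real.cos u - 4 - γ)|)
          (|64 * Real.cos u ^ 2 - 2 * (4 + γ) * Real.cos u - 32|))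
      simp only [hf] at h
      linarith
    rw [abs_eq_zero] at h1 h2 h3
    have hcc : Real.cos u ^ 2 = 1 / 2 := by linarith
    have hγc : (4 + γ) * Real.cos u = 0 := by nlinarith
    have hsz : Real.sin u = 0 := by
      linear_combination (Real.cos u / 16) * h2 + (Real.sin u / 8) * hγc - 2 * Real.sin u * hcc
    have := Real.sin_sq_add_cos_sq u
    nlinarith
  have hcont : Continuous f := by
    apply Continuous.max
    · exact (Continuous.abs (by continuity))
    exact Continuous.max (Continuous.abs (by continuity)) (Continuous.abs (by continuity))
  have hne : (Set.Icc (-Real.pi) Real.pi).Nonempty :=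
    ⟨0, Set.mem_Icc.mpr ⟨by linarith [Real.pi_pos], by linarith [Real.pi_pos]⟩⟩
  obtain ⟨u₀, hu₀, hmin⟩ := isCompact_Icc.exists_isMinOn hne hcont.continuousOn
  exact ⟨f u₀, hpos u₀, fun u hu => hmin hu⟩
end

section
/- For every γ ∈ ℝ with γ ∉ {−8, 0} there exists M' > 0 such that for all u ∈ [−π, π], max(|−16 cos²u + 2(4+γ) cos u + 8|, |2 sin u (16 cos u − 4 − γ)|) ≥ M'. -/
/-- For every `γ ∉ {−8, 0}` the second and third derivatives of the one-dimensional
phase `φ(u) = (2 − 2cos u)(2 + γ − 2cos u) + v u` have maximal modulus bounded below by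
a positive constant `M'` (depending only on `γ`) on `[−π, π]`. -/
theorem stmt6 (γ : ℝ) (hγ : γ ≠ -8 ∧ γ ≠ 0) :
    ∃ M' > (0 : ℝ), ∀ u ∈ Set.Icc (-Real.pi) Real.pi,
      M' ≤ max (|(-16) * Real.cos u ^ 2 + 2 * (4 + γ) * Real.cos u + 8|)
          (|2 * Real.sin u * (16 * Real.cos u - 4 - γ)|) := by
  set f : ℝ → ℝ := fun u => max (|(-16) * Real.cos u ^ 2 + 2 * (4 + γ) * Real.cos u + 8|)
          (|2 * Real.sin u * (16 * Real.cos u - 4 - γ)|) with hf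
  have key : ∀ u : ℝ, 0 < f u := by
    intro u
    by_contra h
    push_neg at h
    have hA : (-16) * Real.cos u ^ 2 + 2 * (4 + γ) * Real.cos u + 8 = 0 := by
      have h1 : |(-16) * Real.cos u ^ 2 + 2 * (4 + γ) * Real.cos u + 8| ≤ 0 :=
        le_trans (le_max_left _ _) h
      have := abs_nonneg ((-16) * Real.cos u ^ 2 + 2 * (4 + γ) * Real.cos u + 8)
      exact abs_eq_zero.mp (le_antisymm h1 this)
    have hB : 2 * Real.sin u * (16 * Real.cos u - 4 - γ) = 0 := by
      have h1 : |2 * Real.sin u * (16 * Real.cos u - 4 - γ)| ≤ 0 :=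
        le_trans (le_max_right _ _) h
      have := abs_nonneg (2 * Real.sin u * (16 * Real.cos u - 4 - γ))
      exact abs_eq_zero.mp (le_antisymm h1 this)
    have hpyth := Real.sin_sq_add_cos_sq u
    rcases mul_eq_zero.mp hB with h2 | hc
    · have hs : Real.sin u = 0 := by
        rcases mul_eq_zero.mp h2 with h3 | h3
        · norm_num at h3
        · exact h3
      have hc2 : (Real.cos u - 1) * (Real.cos u + 1) = 0 := by nlinarith
      have h4 : Real.cos u = 1 ∨ Real.cos u = -1 := by
        rcases mul_eq_zero.mp hc2 with h4 | h4
        · exact Or.inl (by linarith)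
        · exact Or.inr (by linarith)
      rcases h4 with h4 | h4
      · rw [h4] at hA; apply hγ.2; nlinarith
      · rw [h4] at hA; apply hγ.1; nlinarith
    · -- 16 cos u = 4 + γ
      have hg : γ = 16 * Real.cos u - 4 := by linarith
      subst hg
      nlinarith [sq_nonneg (Real.cos u)]
  have hcont : ContinuousOn f (Set.Icc (-Real.pi) Real.pi) := by
    apply Continuous.continuousOn
    fun_prop
  obtain ⟨u₀, hu₀, hmin⟩ := isCompact_Icc.exists_isMinOn
    ⟨0, by constructor <;> simp [Real.pi_nonneg, neg_nonpos.mpr Real.pi_nonneg]⟩ hcont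
  exact ⟨f u₀, key u₀, fun u hu => hmin hu⟩
end

section
/- Let d ≥ 2 be an integer, γ ∈ ℝ, and ξ = (ξ₁, …, ξ_d) ∈ ℝ^d. Set ω(ξ)² = Σ_{j=1}^d (2 − 2cos ξ_j), and let H(ξ) be the d×d real symmetric matrix with diagonal entries H_{jj} = (4ω(ξ)² + 2γ) cos ξ_j + 8 sin²ξ_j and off-diagonal entries H_{jk} = 8 sin ξ_j sin ξ_k for j ≠ k. Then det H(ξ) = (4ω(ξ)² + 2γ)^{d−1} [ (4ω(ξ)² + 2γ) ∏_{j=1}^d cos ξ_j + 8 Σ_{j=1}^d sin²ξ_j ∏_{l ≠ j} cos ξ_l ]. -/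
open Finset

lemma det_updateRow_diagonal {n : Type*} [Fintype n] [DecidableEq n]
    (a b : n → ℝ) (i : n) :
    (Matrix.updateRow (Matrix.diagonal a) i b).det =
      b i * ∏ j ∈ Finset.univ.erase i, a j := by
  rw [← Matrix.cramer_transpose_apply, Matrix.diagonal_transpose,
    Matrix.cramer_eq_adjugate_mulVec, Matrix.adjugate_diagonal]
  simp [Matrix.mulVec_diagonal, mul_comm]

lemma det_diag_add_rank_one {n : Type*} [Fintype n] [DecidableEq n]
    (a u v : n → ℝ) :
    (Matrix.of fun i j => (if i = j then a i else 0) + u i * v j).det =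
      ∏ i, a i + ∑ i, u i * v i * ∏ l ∈ Finset.univ.erase i, a l := by
  classical
  set m : n → n → ℝ := fun i j => if i = j then a i else 0 with hm
  set m' : n → n → ℝ := fun i => u i • v with hm'
  have key := MultilinearMap.map_add_univ
    ((Matrix.detRowAlternating (R := ℝ) (n := n)).toMultilinearMap) m m'
  simp only [AlternatingMap.coe_multilinearMap] at key
  have hM : (Matrix.of fun i j => (if i = j then a i else 0) + u i * v j) =
      Matrix.of (m + m') := by
    funext i j
    simp [hm, hm', Pi.add_apply]
  rw [hM, Matrix.det]
  erw [key]
  -- g s := det of piecewise matrix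
  have hzero : ∀ s : Finset n, 1 < sᶜ.card →
      (Matrix.of (s.piecewise m m')).det = 0 := by
    intro s hs
    obtain ⟨i, hi, k, hk, hik⟩ := Finset.one_lt_card.mp hs
    rw [Finset.mem_compl] at hi hk
    set N : Matrix n n ℝ := Matrix.of (s.piecewise m m') with hN
    have hNi : N i = u i • v := by
      show s.piecewise m m' i = m' i
      exact Finset.piecewise_eq_of_notMem _ _ _ hi
    have hNk : N k = u k • v := by
      show s.piecewise m m' k = m' k
      exact Finset.piecewise_eq_of_notMem _ _ _ hk
    calc N.det = (N.updateRow i (u i • v)).det := by rw [← hNi, Matrix.updateRow_eq_self]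
      _ = u i * (N.updateRow i v).det := Matrix.det_updateRow_smul N i (u i) v
      _ = u i * ((N.updateRow i v).updateRow k (u k • v)).det := by
          rw [show u k • v = (N.updateRow i v) k by
                rw [Matrix.updateRow_ne (Ne.symm hik)]; exact hNk.symm,
            Matrix.updateRow_eq_self]
      _ = u i * (u k * ((N.updateRow i v).updateRow k v).det) := by
          rw [Matrix.det_updateRow_smul]
      _ = 0 := by
          rw [Matrix.det_zero_of_row_eq hik]
          · ring
          · rw [Matrix.updateRow_ne hik, Matrix.updateRow_self, Matrix.updateRow_self]
  have hmd : (Matrix.of m : Matrix n n ℝ) = Matrix.diagonal a := by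
    ext i j; by_cases h : i = j <;> simp [hm, Matrix.diagonal, h]
  set S : Finset (Finset n) := insert Finset.univ (Finset.univ.image fun i => Finset.univ.erase i)
    with hS
  have hsub : ∑ s : Finset n, (Matrix.of (s.piecewise m m')).det
      = ∑ s ∈ S, (Matrix.of (s.piecewise m m')).det := by
    refine (Finset.sum_subset (Finset.subset_univ S) ?_).symm
    intro s _ hsS
    apply hzero
    by_contra h
    push_neg at h
    interval_cases hc : sᶜ.card
    · have : s = Finset.univ := by
        have := Finset.card_eq_zero.mp hc
        rwa [Finset.compl_eq_empty_iff] at this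
      exact hsS (by simp [hS, this])
    · obtain ⟨i, hi⟩ := Finset.card_eq_one.mp hc
      have : s = Finset.univ.erase i := by
        rw [← Finset.compl_singleton, ← hi, compl_compl]
      exact hsS (by simp [hS]; right; exact ⟨i, this.symm⟩)
  show ∑ s : Finset n, (Matrix.of (s.piecewise m m')).det = _
  rw [hsub, hS, Finset.sum_insert, Finset.sum_image]
  · congr 1
    · rw [Finset.piecewise_univ, hmd, Matrix.det_diagonal]
    · refine Finset.sum_congr rfl fun i _ => ?_
      have : Matrix.of ((Finset.univ.erase i).piecewise m m')
          = (Matrix.diagonal a).updateRow i (u i • v) := by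
        ext j k
        by_cases h : j = i
        · subst h
          rw [Matrix.updateRow_self]
          simp [Finset.piecewise_eq_of_notMem _ _ _ (Finset.notMem_erase j _), hm']
        · rw [Matrix.updateRow_ne h]
          have hj : j ∈ Finset.univ.erase i := Finset.mem_erase.mpr ⟨h, Finset.mem_univ j⟩
          show (Finset.univ.erase i).piecewise m m' j k = Matrix.diagonal a j k
          rw [Finset.piecewise_eq_of_mem _ _ _ hj, ← hmd]
          rfl
      rw [this, Matrix.det_updateRow_smul, det_updateRow_diagonal]
      ring
  · intro i _ j _ h
    have := congrArg (·ᶜ) h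
    simp only [← Finset.compl_singleton, compl_compl] at this
    exact Finset.singleton_injective this
  · intro hmem
    rw [Finset.mem_image] at hmem
    obtain ⟨i, -, hi⟩ := hmem
    exact (Finset.erase_ne_self.mpr (Finset.mem_univ i)) hi

/-- Determinant of the Hessian matrix of the phase `ξ ↦ ω(ξ)⁴ + γω(ξ)²` of the discrete
fourth-order Schrödinger equation on `ℤ^d`, where `ω(ξ)² = Σⱼ (2 − 2cos ξⱼ)`. -/
theorem stmt7 (d : ℕ) (hd : 2 ≤ d) (γ : ℝ) (ξ : Fin d → ℝ) :
    (Matrix.of fun j k : Fin d =>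
        if j = k then
          (4 * (∑ l, (2 - 2 * Real.cos (ξ l))) + 2 * γ) * Real.cos (ξ j)
            + 8 * Real.sin (ξ j) ^ 2
        else 8 * Real.sin (ξ j) * Real.sin (ξ k)).det =
      (4 * (∑ l, (2 - 2 * Real.cos (ξ l))) + 2 * γ) ^ (d - 1) *
        ((4 * (∑ l, (2 - 2 * Real.cos (ξ l))) + 2 * γ) * ∏ j, Real.cos (ξ j)
          + 8 * ∑ j, Real.sin (ξ j) ^ 2 * ∏ l ∈ Finset.univ.erase j, Real.cos (ξ l)) := by
  set A : ℝ := 4 * (∑ l, (2 - 2 * Real.cos (ξ l))) + 2 * γ with hA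
  have hmat : (Matrix.of fun j k : Fin d =>
        if j = k then A * Real.cos (ξ j) + 8 * Real.sin (ξ j) ^ 2
        else 8 * Real.sin (ξ j) * Real.sin (ξ k)) =
      (Matrix.of fun j k : Fin d =>
        (if j = k then A * Real.cos (ξ j) else 0)
          + (8 * Real.sin (ξ j)) * Real.sin (ξ k)) := by
    ext j k
    by_cases h : j = k
    · subst h; simp [sq]; ring
    · simp [h]
  rw [hmat, det_diag_add_rank_one (fun j => A * Real.cos (ξ j))
    (fun j => 8 * Real.sin (ξ j)) (fun j => Real.sin (ξ j))]
  have hApow : A ^ d = A ^ (d - 1) * A := by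
    rw [← pow_succ, Nat.sub_add_cancel (le_trans one_le_two hd)]
  have h1 : ∀ j : Fin d, ∏ l ∈ Finset.univ.erase j, (A * Real.cos (ξ l)) =
      A ^ (d - 1) * ∏ l ∈ Finset.univ.erase j, Real.cos (ξ l) := by
    intro j
    rw [Finset.prod_mul_distrib, Finset.prod_const,
      Finset.card_erase_of_mem (Finset.mem_univ j), Finset.card_univ, Fintype.card_fin]
  have h2 : ∏ j, (A * Real.cos (ξ j)) = A ^ (d - 1) * A * ∏ j, Real.cos (ξ j) := by
    rw [Finset.prod_mul_distrib, Finset.prod_const, Finset.card_univ, Fintype.card_fin,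
      hApow]
  rw [h2]
  simp only [h1]
  have h3 : ∑ j, (8 * Real.sin (ξ j) * Real.sin (ξ j)) *
        (A ^ (d - 1) * ∏ l ∈ Finset.univ.erase j, Real.cos (ξ l)) =
      A ^ (d - 1) * (8 * ∑ j, Real.sin (ξ j) ^ 2 * ∏ l ∈ Finset.univ.erase j, Real.cos (ξ l)) := by
    rw [Finset.mul_sum, Finset.mul_sum]
    refine Finset.sum_congr rfl fun j _ => ?_
    ring
  rw [h3]
  ring
end

section
/- Let γ ∈ ℝ with γ ≠ −8. There do not exist real numbers c₁, c₂ ∈ [−1,1] \ {0} with (|c₁|, |c₂|) ≠ (1,1) such that both 8(c₁ + c₂) − 4(1/c₁ + 1/c₂) = 8 + γ and −2(c₁ + c₂) + 1/c₁ + 1/c₂ + 1/c₁³ + 1/c₂³ = 0 hold. -/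
/-!
The second equation says `w c₁ + w c₂ = 0` for the odd function `w c = -2c + 1/c + 1/c³`,
which is strictly decreasing on `(0, ∞)` and vanishes at `1`. Hence `w ≥ 0` on `(0, 1]` with
equality only at `1`: if `c₁, c₂` have the same sign, both have modulus `1`; if they have
opposite signs, injectivity of `w` on `(0, ∞)` forces `c₂ = -c₁`, and then the first equation
reads `0 = 8 + γ`.
-/

noncomputable def cubicWeight (c : ℝ) : ℝ := -2 * c + 1 / c + 1 / c ^ 3

lemma cubicWeight_neg (c : ℝ) : cubicWeight (-c) = -cubicWeight c := by
  simp only [cubicWeight, Odd.neg_pow (by decide : Odd 3), one_div, inv_neg]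
  ring

lemma cubicWeight_one : cubicWeight 1 = 0 := by norm_num [cubicWeight]

lemma strictAntiOn_cubicWeight : StrictAntiOn cubicWeight (Set.Ioi 0) := by
  intro x (hx : 0 < x) y _ hxy
  have hinv : 1 / y < 1 / x := one_div_lt_one_div_of_lt hx hxy
  have hinv_cube : 1 / y ^ 3 < 1 / x ^ 3 :=
    one_div_lt_one_div_of_lt (pow_pos hx 3) (pow_lt_pow_left₀ hxy hx.le (by norm_num))
  simp only [cubicWeight]
  linarith

lemma cubicWeight_nonneg {c : ℝ} (h₀ : 0 < c) (h₁ : c ≤ 1) : 0 ≤ cubicWeight c :=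
  cubicWeight_one ▸ strictAntiOn_cubicWeight.antitoneOn h₀ (Set.mem_Ioi.2 one_pos) h₁

lemma eq_one_of_cubicWeight_eq_zero {c : ℝ} (h₀ : 0 < c) (h : cubicWeight c = 0) : c = 1 :=
  strictAntiOn_cubicWeight.injOn h₀ (Set.mem_Ioi.2 one_pos) (h.trans cubicWeight_one.symm)

lemma add_eq_zero_or_abs_eq_one_of_cubicWeight_add_eq_zero {c₁ c₂ : ℝ}
    (h₁ : |c₁| ≤ 1) (h₂ : |c₂| ≤ 1) (hc₁ : c₁ ≠ 0) (hc₂ : c₂ ≠ 0)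
    (h : cubicWeight c₁ + cubicWeight c₂ = 0) :
    c₁ + c₂ = 0 ∨ (|c₁| = 1 ∧ |c₂| = 1) := by
  wlog hpos₁ : 0 < c₁ generalizing c₁ c₂
  · have hneg := this (c₁ := -c₁) (c₂ := -c₂) (by rwa [abs_neg]) (by rwa [abs_neg])
      (neg_ne_zero.2 hc₁) (neg_ne_zero.2 hc₂)
      (by rw [cubicWeight_neg, cubicWeight_neg]; linarith)
      (neg_pos.2 (lt_of_le_of_ne (not_lt.1 hpos₁) hc₁))
    rw [abs_neg, abs_neg] at hneg
    exact hneg.imp_left fun hs => by linarith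
  rcases hc₂.lt_or_gt with hneg₂ | hpos₂
  · left
    have : -c₂ = c₁ := strictAntiOn_cubicWeight.injOn (neg_pos.2 hneg₂) hpos₁
      (by rw [cubicWeight_neg]; linarith)
    linarith
  · right
    have hw₁ := cubicWeight_nonneg hpos₁ (le_of_abs_le h₁)
    have hw₂ := cubicWeight_nonneg hpos₂ (le_of_abs_le h₂)
    rw [eq_one_of_cubicWeight_eq_zero hpos₁ (by linarith),
      eq_one_of_cubicWeight_eq_zero hpos₂ (by linarith)]
    norm_num

/-- For `γ ≠ −8` there are no `c₁, c₂ ∈ [−1,1] \ {0}` with `(|c₁|, |c₂|) ≠ (1,1)`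
solving simultaneously `8(c₁+c₂) − 4(1/c₁+1/c₂) = 8 + γ` and
`−2(c₁+c₂) + 1/c₁ + 1/c₂ + 1/c₁³ + 1/c₂³ = 0`: this is the key nonvanishing claim
(the cubic coefficient `a₁` does not vanish on `E_γ`). -/
theorem stmt14 (γ : ℝ) (hγ : γ ≠ -8) :
    ¬ ∃ c₁ c₂ : ℝ, c₁ ∈ Set.Icc (-1 : ℝ) 1 ∧ c₂ ∈ Set.Icc (-1 : ℝ) 1 ∧
      c₁ ≠ 0 ∧ c₂ ≠ 0 ∧ (|c₁|, |c₂|) ≠ (1, 1) ∧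
      8 * (c₁ + c₂) - 4 * (1 / c₁ + 1 / c₂) = 8 + γ ∧
      -2 * (c₁ + c₂) + 1 / c₁ + 1 / c₂ + 1 / c₁ ^ 3 + 1 / c₂ ^ 3 = 0 := by
  rintro ⟨c₁, c₂, hc₁, hc₂, hne₁, hne₂, habs, hfirst, hsecond⟩
  have hsum : cubicWeight c₁ + cubicWeight c₂ = 0 := by
    rw [← hsecond, cubicWeight, cubicWeight]
    ring
  rcases add_eq_zero_or_abs_eq_one_of_cubicWeight_add_eq_zero (abs_le.2 hc₁) (abs_le.2 hc₂)
    hne₁ hne₂ hsum with hopp | ⟨h₁, h₂⟩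
  · obtain rfl : c₂ = -c₁ := by linarith
    rw [one_div, one_div, inv_neg] at hfirst
    exact hγ (by linarith)
  · exact habs (by rw [h₁, h₂])
end
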